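/- Let P be a convex polygon in ℝ² (a compact convex set with nonempty interior that is the convex hull of finitely many points, having at least one edge). Then the width of P is attained in a direction normal to one of its edges: there exists an edge of P with outer unit normal u such that width(P) = width_u(P). -/

import Mathlib

open Metric Set
open scoped RealInnerProductSpace

/-- The directional width of a set `K` in direction `v`. -/
noncomputable def dirWidth (v : EuclideanSpace ℝ (Fin 2))
    (K : Set (EuclideanSpace ℝ (Fin 2))) : ℝ :=
  sSup ((fun x => ⟪v, x⟫) '' K) - sInf ((fun x => ⟪v, x⟫) '' K)

/-- The width of `K`: the minimum directional width over all unit directions. -/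
noncomputable def setWidth (K : Set (EuclideanSpace ℝ (Fin 2))) : ℝ :=
  sInf {w | ∃ v : EuclideanSpace ℝ (Fin 2), ‖v‖ = 1 ∧ w = dirWidth v K}

/-- The face of `P` in outer normal direction `u`: the set of points of `P` maximizing
the linear functional `x ↦ ⟪u, x⟫`. -/
noncomputable def normalFace (P : Set (EuclideanSpace ℝ (Fin 2)))
    (u : EuclideanSpace ℝ (Fin 2)) : Set (EuclideanSpace ℝ (Fin 2)) :=
  {x ∈ P | ⟪u, x⟫ = sSup ((fun y => ⟪u, y⟫) '' P)}

/-- `u` is the outer unit normal of an edge (one-dimensional face) of `P`. -/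
def IsEdgeNormal (P : Set (EuclideanSpace ℝ (Fin 2)))
    (u : EuclideanSpace ℝ (Fin 2)) : Prop :=
  ‖u‖ = 1 ∧ Module.finrank ℝ (vectorSpan ℝ (normalFace P u)) = 1

/-! The directional width of `P = conv V` is `v ↦ max_V ⟪v, ·⟫ + max_V ⟪-v, ·⟫`, a continuous
function, so it attains its minimum on the unit circle at some `u`. If neither `u` nor `-u` is an
edge normal, the two support faces are single vertices `p` and `q`; these stay the unique
maximisers for nearby directions, so near `u` the width is the linear functional `⟪·, p - q⟫`,
which is positive at `u`. Rotating `u` slightly towards the side on which this functional does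
not increase strictly decreases it, contradicting minimality. -/

open Filter Topology Module

local notation "ℝ²" => EuclideanSpace ℝ (Fin 2)

section InnerProductSpace

variable {E : Type*} [NormedAddCommGroup E] [InnerProductSpace ℝ E]

noncomputable def supportFunction (K : Set E) (v : E) : ℝ :=
  sSup ((⟪v, ·⟫) '' K)

theorem isGreatest_inner_image_convexHull {V : Finset E} (hV : V.Nonempty) (v : E) :
    IsGreatest ((⟪v, ·⟫) '' convexHull ℝ ↑V) (V.sup' hV (⟪v, ·⟫)) := by
  obtain ⟨p, hp, hpmax⟩ := Finset.exists_mem_eq_sup' hV (⟪v, ·⟫)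
  refine ⟨hpmax ▸ mem_image_of_mem _ (subset_convexHull ℝ _ hp), ?_⟩
  rintro _ ⟨x, hx, rfl⟩
  obtain ⟨y, hy, hxy⟩ :=
    ((innerₗ E v).convexOn convex_univ).exists_ge_of_mem_convexHull (subset_univ _) hx
  exact hxy.trans (Finset.le_sup' (⟪v, ·⟫) hy)

theorem supportFunction_convexHull {V : Finset E} (hV : V.Nonempty) (v : E) :
    supportFunction (convexHull ℝ ↑V) v = V.sup' hV (⟪v, ·⟫) :=
  (isGreatest_inner_image_convexHull hV v).csSup_eq

theorem continuous_supportFunction_convexHull {V : Finset E} (hV : V.Nonempty) :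
    Continuous (supportFunction (convexHull ℝ (V : Set E))) := by
  simp only [funext (supportFunction_convexHull hV)]
  exact Continuous.finset_sup'_apply hV fun x _ => continuous_id.inner continuous_const

theorem supportFunction_convexHull_eventuallyEq {V : Finset E} {u p : E} (hp : p ∈ V)
    (hstrict : ∀ x ∈ V, x ≠ p → ⟪u, x⟫ < ⟪u, p⟫) :
    supportFunction (convexHull ℝ ↑V) =ᶠ[𝓝 u] (⟪·, p⟫) := by
  have hnear : ∀ᶠ v in 𝓝 u, ∀ x ∈ V, x ≠ p → ⟪v, x⟫ < ⟪v, p⟫ := by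
    refine (eventually_all_finset V).2 fun x hx => ?_
    by_cases hxp : x = p
    · exact Eventually.of_forall fun _ h => absurd hxp h
    · exact ((continuous_id.inner continuous_const).continuousAt.eventually_lt
        (continuous_id.inner continuous_const).continuousAt (hstrict x hx hxp)).mono
        fun _ h _ => h
  filter_upwards [hnear] with v hv
  rw [supportFunction_convexHull ⟨p, hp⟩]
  refine le_antisymm (Finset.sup'_le _ _ fun x hx => ?_) (Finset.le_sup' (⟪v, ·⟫) hp)
  rcases eq_or_ne x p with rfl | hxp
  · exact le_rfl
  · exact (hv x hx hxp).le

theorem exists_norm_eq_one_inner_eq_zero [FiniteDimensional ℝ E] (hE : 2 ≤ finrank ℝ E) (u : E) :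
    ∃ w : E, ‖w‖ = 1 ∧ ⟪u, w⟫ = 0 := by
  have hspan : finrank ℝ (ℝ ∙ u) ≤ 1 := by
    simpa using finrank_span_le_card (R := ℝ) ({u} : Set E)
  have hne : (ℝ ∙ u)ᗮ ≠ ⊥ := fun h => by
    have := (ℝ ∙ u).finrank_add_finrank_orthogonal
    rw [h, finrank_bot] at this
    omega
  obtain ⟨w, hw, hw0⟩ := Submodule.exists_mem_ne_zero_of_ne_bot hne
  refine ⟨(‖w‖⁻¹ : ℝ) • w, norm_smul_inv_norm hw0, ?_⟩
  rw [real_inner_smul_right, Submodule.mem_orthogonal_singleton_iff_inner_right.1 hw, mul_zero]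

theorem not_isLocalMinOn_inner_sphere [FiniteDimensional ℝ E] (hE : 2 ≤ finrank ℝ E)
    {u d : E} (hu : ‖u‖ = 1) (hd : 0 < ⟪u, d⟫) :
    ¬IsLocalMinOn (⟪·, d⟫) (sphere 0 1) u := by
  obtain ⟨w, hw, huw, hwd⟩ : ∃ w : E, ‖w‖ = 1 ∧ ⟪u, w⟫ = 0 ∧ ⟪w, d⟫ ≤ 0 := by
    obtain ⟨w, hw, huw⟩ := exists_norm_eq_one_inner_eq_zero hE u
    rcases le_total ⟪w, d⟫ 0 with hwd | hwd
    · exact ⟨w, hw, huw, hwd⟩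
    · exact ⟨-w, by rwa [norm_neg], by rw [inner_neg_right, huw, neg_zero],
        by rw [inner_neg_left]; linarith⟩
  set γ : ℝ → E := fun t => Real.cos t • u + Real.sin t • w
  have hγ : Tendsto γ (𝓝 0) (𝓝[sphere 0 1] u) := by
    refine tendsto_nhdsWithin_iff.2 ⟨?_, Eventually.of_forall fun t => ?_⟩
    · have hcont : Continuous γ := by fun_prop
      simpa [γ] using hcont.tendsto 0
    · have hsq : ‖γ t‖ ^ 2 = 1 := by
        rw [norm_add_sq_real, norm_smul, norm_smul, real_inner_smul_left, real_inner_smul_right,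
          huw, hu, hw, Real.norm_eq_abs, Real.norm_eq_abs]
        nlinarith [Real.sin_sq_add_cos_sq t, sq_abs (Real.sin t), sq_abs (Real.cos t)]
      rw [mem_sphere_zero_iff_norm]
      exact (pow_eq_one_iff_of_nonneg (norm_nonneg _) two_ne_zero).1 hsq
  intro hmin
  obtain ⟨t, hle, ht⟩ := (((hγ.eventually hmin).filter_mono nhdsWithin_le_nhds).and
    (Ioo_mem_nhdsGT Real.pi_pos)).exists
  have hγd : ⟪γ t, d⟫ = Real.cos t * ⟪u, d⟫ + Real.sin t * ⟪w, d⟫ := by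
    simp only [γ, inner_add_left, real_inner_smul_left]
  have hcos : Real.cos t < 1 := by
    simpa using Real.cos_lt_cos_of_nonneg_of_le_pi le_rfl ht.2.le ht.1
  have hsin : 0 < Real.sin t := Real.sin_pos_of_pos_of_lt_pi ht.1 ht.2
  have : ⟪u, d⟫ ≤ ⟪γ t, d⟫ := hle
  nlinarith

theorem subsingleton_of_finrank_vectorSpan_ne_one [FiniteDimensional ℝ E]
    (hE : finrank ℝ E = 2) {s : Set E} {u : E} {c : ℝ} (hu : u ≠ 0) (hs : ∀ x ∈ s, ⟪u, x⟫ = c)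
    (h : finrank ℝ (vectorSpan ℝ s) ≠ 1) : s.Subsingleton := by
  have hle : vectorSpan ℝ s ≤ (ℝ ∙ u)ᗮ := by
    refine Submodule.span_le.2 ?_
    rintro _ ⟨x, hx, y, hy, rfl⟩
    rw [SetLike.mem_coe, Submodule.mem_orthogonal_singleton_iff_inner_right]
    show ⟪u, x - y⟫ = 0
    rw [inner_sub_right, hs x hx, hs y hy, sub_self]
  have hperp : finrank ℝ (ℝ ∙ u)ᗮ = 1 := by
    have := (ℝ ∙ u).finrank_add_finrank_orthogonal
    rw [finrank_span_singleton hu, hE] at this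
    omega
  have hzero : finrank ℝ (vectorSpan ℝ s) = 0 := by
    have := Submodule.finrank_mono hle
    omega
  rwa [Submodule.finrank_eq_zero, vectorSpan_eq_bot_iff_subsingleton] at hzero

end InnerProductSpace

theorem dirWidth_eq_supportFunction_add (v : ℝ²) (K : Set ℝ²) :
    dirWidth v K = supportFunction K v + supportFunction K (-v) := by
  rw [dirWidth, Real.sInf_def, sub_neg_eq_add, ← Set.image_neg_eq_neg, Set.image_image]
  simp only [supportFunction, inner_neg_left]

theorem dirWidth_neg (v : ℝ²) (K : Set ℝ²) : dirWidth (-v) K = dirWidth v K := by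
  rw [dirWidth_eq_supportFunction_add, dirWidth_eq_supportFunction_add, neg_neg, add_comm]

theorem continuous_dirWidth_convexHull {V : Finset ℝ²} (hV : V.Nonempty) :
    Continuous (dirWidth · (convexHull ℝ (V : Set ℝ²))) := by
  simp only [dirWidth_eq_supportFunction_add]
  exact (continuous_supportFunction_convexHull hV).add
    ((continuous_supportFunction_convexHull hV).comp continuous_neg)

theorem setWidth_eq_of_isMinOn {K : Set ℝ²} {u : ℝ²} (hu : ‖u‖ = 1)
    (hmin : IsMinOn (dirWidth · K) (sphere 0 1) u) : setWidth K = dirWidth u K :=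
  IsLeast.csInf_eq ⟨⟨u, hu, rfl⟩, by
    rintro _ ⟨v, hv, rfl⟩
    exact hmin (mem_sphere_zero_iff_norm.2 hv)⟩

theorem isEdgeNormal_of_not_subsingleton {P : Set ℝ²} {u : ℝ²} (hu : ‖u‖ = 1)
    (h : ¬(normalFace P u).Subsingleton) : IsEdgeNormal P u :=
  ⟨hu, not_not.1 fun hne => h <| subsingleton_of_finrank_vectorSpan_ne_one
    finrank_euclideanSpace_fin (norm_ne_zero_iff.1 (hu ▸ one_ne_zero)) (fun _ hx => hx.2) hne⟩

theorem IsEdgeNormal.nontrivial {P : Set ℝ²} {u : ℝ²} (h : IsEdgeNormal P u) : P.Nontrivial := by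
  refine (Set.not_subsingleton_iff.1 fun hs : (normalFace P u).Subsingleton => ?_).mono
    (sep_subset _ _)
  have := h.2
  rw [(vectorSpan_eq_bot_iff_subsingleton (k := ℝ)).2 hs, finrank_bot] at this
  exact zero_ne_one this

theorem exists_forall_inner_lt_of_subsingleton_normalFace {V : Finset ℝ²} (hV : V.Nonempty)
    {u : ℝ²} (h : (normalFace (convexHull ℝ ↑V) u).Subsingleton) :
    ∃ p ∈ V, ∀ x ∈ V, x ≠ p → ⟪u, x⟫ < ⟪u, p⟫ := by
  obtain ⟨p, hp, hpmax⟩ := Finset.exists_mem_eq_sup' hV (⟪u, ·⟫)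
  have hface : ∀ x ∈ V, ⟪u, x⟫ = ⟪u, p⟫ → x ∈ normalFace (convexHull ℝ ↑V) u :=
    fun x hx hxp => ⟨subset_convexHull ℝ _ hx,
      hxp.trans (hpmax.symm.trans (supportFunction_convexHull hV u).symm)⟩
  exact ⟨p, hp, fun x hx hxp => (hpmax ▸ Finset.le_sup' (⟪u, ·⟫) hx).lt_of_ne
    fun heq => hxp (h (hface x hx heq) (hface p hp rfl))⟩

theorem exists_dirWidth_eventuallyEq_inner {V : Finset ℝ²} {u : ℝ²}
    (hnt : (convexHull ℝ (V : Set ℝ²)).Nontrivial)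
    (hu : (normalFace (convexHull ℝ ↑V) u).Subsingleton)
    (hu' : (normalFace (convexHull ℝ ↑V) (-u)).Subsingleton) :
    ∃ d, 0 < ⟪u, d⟫ ∧ (dirWidth · (convexHull ℝ ↑V)) =ᶠ[𝓝 u] (⟪·, d⟫) := by
  have hV : V.Nonempty := Finset.coe_nonempty.1 (convexHull_nonempty_iff.1 hnt.nonempty)
  obtain ⟨p, hp, hpu⟩ := exists_forall_inner_lt_of_subsingleton_normalFace hV hu
  obtain ⟨q, hq, hqu⟩ := exists_forall_inner_lt_of_subsingleton_normalFace hV hu'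
  obtain ⟨x, hx, hxp⟩ : ∃ x ∈ V, x ≠ p := by
    by_contra! hVp
    refine hnt.not_subsingleton ((subsingleton_singleton (a := p)).anti ?_)
    exact (convexHull_mono fun y hy => hVp y hy).trans (convexHull_singleton p).le
  have hqx : ⟪u, q⟫ ≤ ⟪u, x⟫ := by
    rcases eq_or_ne x q with rfl | hxq
    · exact le_rfl
    · have := hqu x hx hxq
      rw [inner_neg_left, inner_neg_left] at this
      linarith
  refine ⟨p - q, by rw [inner_sub_right]; linarith [hpu x hx hxp], ?_⟩
  filter_upwards [supportFunction_convexHull_eventuallyEq hp hpu,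
    (continuous_neg.tendsto u).eventually (supportFunction_convexHull_eventuallyEq hq hqu)]
    with v hvp hvq
  rw [dirWidth_eq_supportFunction_add, hvp, hvq, inner_neg_left, inner_sub_right, sub_eq_add_neg]

theorem width_attained_at_edge_normal_general (P : Set (EuclideanSpace ℝ (Fin 2)))
    (V : Finset (EuclideanSpace ℝ (Fin 2))) (hP : P = convexHull ℝ (V : Set (EuclideanSpace ℝ (Fin 2))))
    (hedge : ∃ u, IsEdgeNormal P u) :
    ∃ u, IsEdgeNormal P u ∧ setWidth P = dirWidth u P := by
  subst hP
  obtain ⟨e, he⟩ := hedge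
  have hnt := he.nontrivial
  have hV : V.Nonempty := Finset.coe_nonempty.1 (convexHull_nonempty_iff.1 hnt.nonempty)
  obtain ⟨u, hus, hmin⟩ := (isCompact_sphere (0 : ℝ²) 1).exists_isMinOn
    (NormedSpace.sphere_nonempty.2 zero_le_one) (continuous_dirWidth_convexHull hV).continuousOn
  have hu := mem_sphere_zero_iff_norm.1 hus
  have hwidth := setWidth_eq_of_isMinOn hu hmin
  by_contra! hno
  have hface : ∀ v : ℝ², ‖v‖ = 1 → dirWidth v (convexHull ℝ ↑V) = dirWidth u (convexHull ℝ ↑V) →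
      (normalFace (convexHull ℝ ↑V) v).Subsingleton := fun v hv hvu => not_not.1 fun h =>
    hno v (isEdgeNormal_of_not_subsingleton hv h) (hwidth.trans hvu.symm)
  obtain ⟨d, hd, hloc⟩ := exists_dirWidth_eventuallyEq_inner hnt (hface u hu rfl)
    (hface (-u) (by rwa [norm_neg]) (dirWidth_neg u _))
  exact not_isLocalMinOn_inner_sphere (by rw [finrank_euclideanSpace_fin]) hu hd
    (hmin.localize.congr (hloc.filter_mono nhdsWithin_le_nhds) hus)

/-- For a convex polygon `P ⊆ ℝ²` (a compact convex set with nonempty interior that is the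
convex hull of finitely many points and has at least one edge), the width of `P` is attained
in a direction normal to one of its edges. -/
theorem width_attained_at_edge_normal (P : Set (EuclideanSpace ℝ (Fin 2)))
    (hcomp : IsCompact P) (hconv : Convex ℝ P) (hint : (interior P).Nonempty)
    (V : Finset (EuclideanSpace ℝ (Fin 2))) (hP : P = convexHull ℝ (V : Set (EuclideanSpace ℝ (Fin 2))))
    (hedge : ∃ u, IsEdgeNormal P u) :
    ∃ u, IsEdgeNormal P u ∧ setWidth P = dirWidth u P :=
  width_attained_at_edge_normal_general P V hP hedge
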